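/- Let s, ψ be measurable on [0,1] with ψ ≥ 0, ω ∈ W_α, 1 < p < ∞, 1/p + 1/q = 1. Assume ∫₀¹ |s(t)|^{-(n+α)/p} ψ(t) dt < ∞ and t^β ≤ |s(t)| ≤ t^{-γ} a.e. for some β, γ > 0. Then for all f ∈ L^p(ω) and g ∈ L^q(ω): ∫_{ℝⁿ} g(x) U_{ψ,s}f(x) ω(x) dx = ∫_{ℝⁿ} f(y) V_{|s(·)|^{-α}ψ, 1/s} g(y) ω(y) dy. -/

import Mathlib

open MeasureTheory Metric Set

noncomputable section

/-- The surface integral of `ω` over the unit sphere `S^{n-1}`,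
with respect to the measure `σ = volume.toSphere` induced by polar coordinates. -/
def sphereInt {n : ℕ} (ω : EuclideanSpace ℝ (Fin n) → ℝ) : ℝ :=
  ∫ x : sphere (0 : EuclideanSpace ℝ (Fin n)) 1, ω x ∂((volume : Measure (EuclideanSpace ℝ (Fin n))).toSphere)

/-- `ω ∈ W_α`: a measurable, a.e. positive weight on `ℝⁿ`, absolutely homogeneous of
degree `α`, whose integral over the unit sphere is finite and positive. -/
structure IsWeight (n : ℕ) (α : ℝ) (ω : EuclideanSpace ℝ (Fin n) → ℝ) : Prop where
  measurable : Measurable ω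
  pos : ∀ᵐ x : EuclideanSpace ℝ (Fin n), 0 < ω x
  homog : ∀ t : ℝ, t ≠ 0 → ∀ x, ω (t • x) = |t| ^ α * ω x
  sphere_integrable : Integrable (fun x : sphere (0 : EuclideanSpace ℝ (Fin n)) 1 => ω x)
      ((volume : Measure (EuclideanSpace ℝ (Fin n))).toSphere)
  sphere_pos : 0 < sphereInt ω

/-- The generalized weighted Hardy–Cesàro operator
`U_{ψ,s} f(x) = ∫₀¹ f(s(t)·x) ψ(t) dt`. -/
def hardyCesaro {n : ℕ} (ψ s : ℝ → ℝ) (f : EuclideanSpace ℝ (Fin n) → ℝ)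
    (x : EuclideanSpace ℝ (Fin n)) : ℝ :=
  ∫ t in Icc (0 : ℝ) 1, f (s t • x) * ψ t

/-- The generalized weighted Cesàro operator
`V_{ψ,s} f(x) = ∫₀¹ f(s(t)·x) |s(t)|ⁿ ψ(t) dt`. -/
def cesaro {n : ℕ} (ψ s : ℝ → ℝ) (f : EuclideanSpace ℝ (Fin n) → ℝ)
    (x : EuclideanSpace ℝ (Fin n)) : ℝ :=
  ∫ t in Icc (0 : ℝ) 1, f (s t • x) * (|s t| ^ (n : ℝ) * ψ t)

/-- The weighted `L^p(ω)` norm `(∫ |f|^p ω dx)^{1/p}`. -/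
def wNorm {n : ℕ} (ω : EuclideanSpace ℝ (Fin n) → ℝ) (p : ℝ)
    (f : EuclideanSpace ℝ (Fin n) → ℝ) : ℝ :=
  (∫ x, |f x| ^ p * ω x) ^ (1 / p)

/-- Membership in the weighted Lebesgue space `L^p(ω)`. -/
def MemWLp {n : ℕ} (ω : EuclideanSpace ℝ (Fin n) → ℝ) (p : ℝ)
    (f : EuclideanSpace ℝ (Fin n) → ℝ) : Prop :=
  AEMeasurable f (volume : Measure (EuclideanSpace ℝ (Fin n))) ∧
    Integrable (fun x => |f x| ^ p * ω x)

/-! The measure `ω(x) dx` is homogeneous of degree `n + α` under dilations. With Hölder's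
inequality this bounds `∫ |g(x) f(s(t) x)| ω(x) dx` by `|s(t)|^{-(n+α)/p} ‖g‖_q ‖f‖_p`, so the
integrability of `|s|^{-(n+α)/p} ψ` lets Fubini swap the integrals on both sides; the
substitution `y = s(t) x` then matches the two inner integrals for each `t`. -/

open scoped ENNReal

namespace MeasureTheory.Measure

/-- `ν` is homogeneous of degree `d` under dilations: `ν (c • A) = |c| ^ d * ν A` for `c ≠ 0`. -/
def IsDilationHomogeneous {E : Type*} [AddCommGroup E] [Module ℝ E] [MeasurableSpace E]
    (ν : Measure E) (d : ℝ) : Prop :=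
  ∀ c : ℝ, c ≠ 0 → ν.map (c • ·) = ENNReal.ofReal (|c| ^ (-d)) • ν

theorem isDilationHomogeneous_addHaar {E : Type*} [NormedAddCommGroup E] [NormedSpace ℝ E]
    [MeasurableSpace E] [BorelSpace E] [FiniteDimensional ℝ E] (μ : Measure E)
    [μ.IsAddHaarMeasure] : μ.IsDilationHomogeneous (Module.finrank ℝ E) := fun c hc => by
  rw [map_addHaar_smul μ hc, abs_inv, abs_pow, ← Real.rpow_natCast, Real.rpow_neg (abs_nonneg c)]

namespace IsDilationHomogeneous

variable {E : Type*} [AddCommGroup E] [Module ℝ E] [MeasurableSpace E] [MeasurableSMul₂ ℝ E]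
  {ν : Measure E} {d : ℝ} {c : ℝ}

theorem lintegral_comp_smul (hν : ν.IsDilationHomogeneous d) (hc : c ≠ 0) (H : E → ℝ≥0∞) :
    ∫⁻ x, H (c • x) ∂ν = ENNReal.ofReal (|c| ^ (-d)) * ∫⁻ x, H x ∂ν := by
  rw [← smul_eq_mul, ← lintegral_smul_measure, ← hν c hc,
    (measurableEmbedding_const_smul₀ hc).lintegral_map]

theorem integral_comp_smul {G : Type*} [NormedAddCommGroup G] [NormedSpace ℝ G]
    (hν : ν.IsDilationHomogeneous d) (hc : c ≠ 0) (H : E → G) :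
    ∫ x, H (c • x) ∂ν = |c| ^ (-d) • ∫ x, H x ∂ν := by
  rw [← (measurableEmbedding_const_smul₀ hc).integral_map, hν c hc, integral_smul_measure,
    ENNReal.toReal_ofReal (by positivity)]

theorem quasiMeasurePreserving_smul (hν : ν.IsDilationHomogeneous d) (hc : c ≠ 0) :
    QuasiMeasurePreserving (c • ·) ν ν :=
  ⟨measurable_const_smul c, by rw [hν c hc]; exact smul_absolutelyContinuous⟩

theorem eLpNorm_comp_smul {G : Type*} [NormedAddCommGroup G] (hν : ν.IsDilationHomogeneous d)
    (hc : c ≠ 0) {p : ℝ} (hp : 0 ≤ p) (F : E → G) :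
    eLpNorm (fun x => F (c • x)) (ENNReal.ofReal p) ν
      = ENNReal.ofReal (|c| ^ (-d / p)) * eLpNorm F (ENNReal.ofReal p) ν := by
  have hmap := (measurableEmbedding_const_smul₀ hc).eLpNorm_map_measure
    (g := F) (p := ENNReal.ofReal p) (μ := ν)
  rw [hν c hc, eLpNorm_smul_measure_of_ne_top ENNReal.ofReal_ne_top] at hmap
  rw [show (fun x => F (c • x)) = F ∘ (c • ·) from rfl, ← hmap, one_div, ENNReal.toReal_inv,
    ENNReal.toReal_ofReal hp,
    ENNReal.ofReal_rpow_of_nonneg (by positivity) (by positivity), ← Real.rpow_mul (abs_nonneg c),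
    smul_eq_mul, neg_mul, ← div_eq_mul_inv, neg_div]

theorem lintegral_enorm_mul_comp_smul_le (hν : ν.IsDilationHomogeneous d) (hc : c ≠ 0)
    {p q : ℝ} (hpq : p.HolderConjugate q) {F G : E → ℝ}
    (hF : AEStronglyMeasurable F ν) (hG : AEStronglyMeasurable G ν) :
    ∫⁻ x, ‖G x * F (c • x)‖ₑ ∂ν ≤ ENNReal.ofReal (|c| ^ (-d / p)) *
      (eLpNorm G (ENNReal.ofReal q) ν * eLpNorm F (ENNReal.ofReal p) ν) := by
  have := hpq.symm.ennrealOfReal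
  rw [← eLpNorm_one_eq_lintegral_enorm]
  calc eLpNorm (G • fun x => F (c • x)) 1 ν
      ≤ eLpNorm G (ENNReal.ofReal q) ν * eLpNorm (fun x => F (c • x)) (ENNReal.ofReal p) ν :=
        eLpNorm_smul_le_mul_eLpNorm (p := ENNReal.ofReal q) (q := ENNReal.ofReal p) (r := 1)
          (hF.comp_quasiMeasurePreserving (hν.quasiMeasurePreserving_smul hc)) hG
    _ = _ := by rw [hν.eLpNorm_comp_smul hc hpq.nonneg]; ring

variable {T : Type*} [MeasurableSpace T] {μ : Measure T}

theorem quasiMeasurePreserving_smul_prod [SFinite ν] (hν : ν.IsDilationHomogeneous d)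
    {c : T → ℝ} (hc : Measurable c) (hc0 : ∀ᵐ t ∂μ, c t ≠ 0) :
    QuasiMeasurePreserving (fun z : T × E => c z.1 • z.2) (μ.prod ν) ν :=
  QuasiMeasurePreserving.prod_of_right ((hc.comp measurable_fst).smul measurable_snd)
    (hc0.mono fun _ ht => hν.quasiMeasurePreserving_smul ht)

theorem integrable_mul_comp_smul_mul [SFinite ν] (hν : ν.IsDilationHomogeneous d)
    {p q : ℝ} (hpq : p.HolderConjugate q) {F G : E → ℝ}
    (hF : MemLp F (ENNReal.ofReal p) ν) (hG : MemLp G (ENNReal.ofReal q) ν)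
    {c w : T → ℝ} (hc : Measurable c) (hc0 : ∀ᵐ t ∂μ, c t ≠ 0) (hw : AEStronglyMeasurable w μ)
    (hI : Integrable (fun t => |c t| ^ (-d / p) * w t) μ) :
    Integrable (fun z : T × E => G z.2 * F (c z.1 • z.2) * w z.1) (μ.prod ν) := by
  have hmeas : AEStronglyMeasurable (fun z : T × E => G z.2 * F (c z.1 • z.2) * w z.1)
      (μ.prod ν) :=
    (hG.1.comp_snd.mul (hF.1.comp_quasiMeasurePreserving
      (hν.quasiMeasurePreserving_smul_prod hc hc0))).mul hw.comp_fst
  refine ⟨hmeas, ?_⟩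
  set C := eLpNorm G (ENNReal.ofReal q) ν * eLpNorm F (ENNReal.ofReal p) ν
  have hC : C < ∞ := ENNReal.mul_lt_top hG.eLpNorm_lt_top hF.eLpNorm_lt_top
  have hfiber : ∀ᵐ t ∂μ, ∫⁻ x, ‖G x * F (c t • x) * w t‖ₑ ∂ν
      ≤ ‖|c t| ^ (-d / p) * w t‖ₑ * C := by
    filter_upwards [hc0] with t ht
    simp_rw [enorm_mul (_ * _) (w t)]
    rw [lintegral_mul_const' _ _ enorm_ne_top, enorm_mul,
      Real.enorm_of_nonneg (Real.rpow_nonneg (abs_nonneg (c t)) _), mul_right_comm]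
    exact mul_le_mul_left (hν.lintegral_enorm_mul_comp_smul_le ht hpq hF.1 hG.1) _
  calc ∫⁻ z, ‖G z.2 * F (c z.1 • z.2) * w z.1‖ₑ ∂(μ.prod ν)
      = ∫⁻ t, ∫⁻ x, ‖G x * F (c t • x) * w t‖ₑ ∂ν ∂μ := lintegral_prod _ hmeas.enorm
    _ ≤ ∫⁻ t, ‖|c t| ^ (-d / p) * w t‖ₑ * C ∂μ := lintegral_mono_ae hfiber
    _ = (∫⁻ t, ‖|c t| ^ (-d / p) * w t‖ₑ ∂μ) * C := lintegral_mul_const' _ _ hC.ne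
    _ < ∞ := ENNReal.mul_lt_top hI.2 hC

theorem integral_mul_integral_comp_smul_mul [SFinite μ] [SFinite ν]
    (hν : ν.IsDilationHomogeneous d) {p q : ℝ} (hpq : p.HolderConjugate q) {F G : E → ℝ}
    (hF : MemLp F (ENNReal.ofReal p) ν) (hG : MemLp G (ENNReal.ofReal q) ν)
    {c w : T → ℝ} (hc : Measurable c) (hc0 : ∀ᵐ t ∂μ, c t ≠ 0) (hw : AEStronglyMeasurable w μ)
    (hI : Integrable (fun t => |c t| ^ (-d / p) * w t) μ) :
    ∫ x, G x * ∫ t, F (c t • x) * w t ∂μ ∂ν = ∫ t, (∫ x, G x * F (c t • x) ∂ν) * w t ∂μ := by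
  simp_rw [← integral_const_mul, ← integral_mul_const, ← mul_assoc]
  exact (integral_integral_swap (hν.integrable_mul_comp_smul_mul hpq hF hG hc hc0 hw hI)).symm

theorem withDensity {α : ℝ} (hν : ν.IsDilationHomogeneous d) {ρ : E → ℝ≥0∞} (hρm : Measurable ρ)
    (hρ : ∀ c : ℝ, c ≠ 0 → ∀ x, ρ (c • x) = ENNReal.ofReal (|c| ^ α) * ρ x) :
    (ν.withDensity ρ).IsDilationHomogeneous (d + α) := by
  intro c hc
  have hρ' : ∀ x, ρ x = ENNReal.ofReal (|c| ^ (-α)) * ρ (c • x) := fun x => by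
    simpa [inv_smul_smul₀ hc, abs_inv, Real.inv_rpow, Real.rpow_neg] using
      hρ c⁻¹ (inv_ne_zero hc) (c • x)
  refine ext_of_lintegral _ fun f hf => ?_
  rw [lintegral_map hf (measurable_const_smul c), lintegral_smul_measure, smul_eq_mul,
    lintegral_withDensity_eq_lintegral_mul _ hρm (g := fun x => f (c • x))
      (hf.comp (measurable_const_smul c)),
    lintegral_withDensity_eq_lintegral_mul _ hρm hf]
  have hscale : ∀ x, ρ x * f (c • x) = ENNReal.ofReal (|c| ^ (-α)) * (ρ (c • x) * f (c • x)) :=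
    fun x => by rw [hρ' x, mul_assoc]
  simp only [Pi.mul_apply, hscale]
  rw [lintegral_const_mul' _ _ ENNReal.ofReal_ne_top,
    hν.lintegral_comp_smul hc fun x => ρ x * f x, ← mul_assoc,
    ← ENNReal.ofReal_mul (by positivity), ← Real.rpow_add (abs_pos.mpr hc), neg_add, add_comm]

end IsDilationHomogeneous

end MeasureTheory.Measure

abbrev weightMeasure {n : ℕ} (ω : EuclideanSpace ℝ (Fin n) → ℝ) :
    Measure (EuclideanSpace ℝ (Fin n)) :=
  volume.withDensity fun x => ENNReal.ofReal (ω x)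

section WeightMeasure

variable {n : ℕ} {ω : EuclideanSpace ℝ (Fin n) → ℝ}

theorem IsWeight.isDilationHomogeneous_weightMeasure {α : ℝ} (hω : IsWeight n α ω) :
    (weightMeasure ω).IsDilationHomogeneous (n + α) := by
  have hvol := Measure.isDilationHomogeneous_addHaar (volume : Measure (EuclideanSpace ℝ (Fin n)))
  rw [finrank_euclideanSpace_fin] at hvol
  exact hvol.withDensity hω.measurable.ennreal_ofReal fun c hc x => by
    rw [hω.homog c hc x, ENNReal.ofReal_mul (by positivity)]

theorem integral_mul_eq_integral_weightMeasure (hωm : Measurable ω) (hω0 : 0 ≤ᵐ[volume] ω)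
    (h : EuclideanSpace ℝ (Fin n) → ℝ) :
    ∫ x, h x * ω x = ∫ x, h x ∂weightMeasure ω := by
  rw [weightMeasure, integral_withDensity_eq_integral_toReal_smul hωm.ennreal_ofReal
    (ae_of_all _ fun _ => ENNReal.ofReal_lt_top)]
  refine integral_congr_ae ?_
  filter_upwards [hω0] with x hx
  rw [ENNReal.toReal_ofReal hx, smul_eq_mul, mul_comm]

theorem MemWLp.memLp_weightMeasure (hωm : Measurable ω) {p : ℝ} (hp : 0 < p)
    {f : EuclideanSpace ℝ (Fin n) → ℝ} (hf : MemWLp ω p f) :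
    MemLp f (ENNReal.ofReal p) (weightMeasure ω) := by
  refine ⟨hf.1.aestronglyMeasurable.mono_ac (withDensity_absolutelyContinuous _ _), ?_⟩
  rw [eLpNorm_lt_top_iff_lintegral_rpow_enorm_lt_top (by simpa using hp) ENNReal.ofReal_ne_top,
    ENNReal.toReal_ofReal hp.le, weightMeasure, lintegral_withDensity_eq_lintegral_mul₀
      hωm.ennreal_ofReal.aemeasurable (hf.1.enorm.pow_const _)]
  refine lt_of_eq_of_lt (lintegral_congr fun x => ?_) hf.2.lintegral_lt_top
  rw [Pi.mul_apply, ENNReal.ofReal_mul (by positivity), Real.enorm_eq_ofReal_abs,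
    ENNReal.ofReal_rpow_of_nonneg (abs_nonneg _) hp.le, mul_comm]

end WeightMeasure

theorem ae_restrict_Icc_ne_zero_of_rpow_le_abs {s : ℝ → ℝ} {β : ℝ}
    (hs : ∀ᵐ t ∂(volume.restrict (Icc (0 : ℝ) 1)), t ^ β ≤ |s t|) :
    ∀ᵐ t ∂(volume.restrict (Icc (0 : ℝ) 1)), s t ≠ 0 := by
  have hIoc : ∀ᵐ t ∂(volume.restrict (Icc (0 : ℝ) 1)), t ∈ Ioc (0 : ℝ) 1 := by
    rw [← Measure.restrict_congr_set Ioc_ae_eq_Icc]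
    exact ae_restrict_mem measurableSet_Ioc
  filter_upwards [hs, hIoc] with t hst ht
  exact abs_pos.mp ((Real.rpow_pos_of_pos ht.1 β).trans_le hst)

theorem abs_inv_rpow_mul_abs_rpow_mul {u : ℝ} (hu : u ≠ 0) (a b x : ℝ) :
    |u⁻¹| ^ a * (|u| ^ b * x) = |u| ^ (b - a) * x := by
  rw [abs_inv, Real.inv_rpow (abs_nonneg u), ← Real.rpow_neg (abs_nonneg u), ← mul_assoc,
    ← Real.rpow_add (abs_pos.mpr hu), neg_add_eq_sub]

theorem hardyCesaro_adjoint_general {n : ℕ} {α p q β γ : ℝ} (hp : 1 < p)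
    (hpq : 1 / p + 1 / q = 1)
    {ω : EuclideanSpace ℝ (Fin n) → ℝ} (hω : IsWeight n α ω)
    {ψ s : ℝ → ℝ} (hψm : Measurable ψ)
    (hsm : Measurable s)
    (hA : IntegrableOn (fun t => |s t| ^ (-((n : ℝ) + α) / p) * ψ t) (Icc (0 : ℝ) 1))
    (hs : ∀ᵐ t ∂(volume.restrict (Icc (0 : ℝ) 1)), t ^ β ≤ |s t| ∧ |s t| ≤ t ^ (-γ))
    (f g : EuclideanSpace ℝ (Fin n) → ℝ) (hf : MemWLp ω p f) (hg : MemWLp ω q g) :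
    ∫ x, g x * hardyCesaro ψ s f x * ω x =
      ∫ y, f y * cesaro (fun t => |s t| ^ (-α) * ψ t) (fun t => (s t)⁻¹) g y * ω y := by
  have hpq' : p.HolderConjugate q :=
    Real.holderConjugate_iff.mpr ⟨hp, by simpa only [one_div] using hpq⟩
  have hν := hω.isDilationHomogeneous_weightMeasure
  have hf' := hf.memLp_weightMeasure hω.measurable hpq'.pos
  have hg' := hg.memLp_weightMeasure hω.measurable hpq'.symm.pos
  have hs0 := ae_restrict_Icc_ne_zero_of_rpow_le_abs (hs.mono fun _ h => h.1)
  have hcesaro : ∀ t, s t ≠ 0 →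
      |(s t)⁻¹| ^ (n : ℝ) * (|s t| ^ (-α) * ψ t) = |s t| ^ (-((n : ℝ) + α)) * ψ t := fun t ht => by
    rw [abs_inv_rpow_mul_abs_rpow_mul ht]; congr 2; ring
  -- the Cesàro side is the Hardy side for `(1/s, q)`; `(n+α)/q - (n+α) = -(n+α)/p`
  have hA' : Integrable (fun t => |(s t)⁻¹| ^ (-((n : ℝ) + α) / q) *
      (|(s t)⁻¹| ^ (n : ℝ) * (|s t| ^ (-α) * ψ t))) (volume.restrict (Icc (0 : ℝ) 1)) := by
    refine hA.congr (hs0.mono fun t ht => ?_)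
    simp only [hcesaro t ht, abs_inv_rpow_mul_abs_rpow_mul ht]
    congr 2
    linear_combination -((n : ℝ) + α) * hpq
  simp only [integral_mul_eq_integral_weightMeasure hω.measurable (hω.pos.mono fun _ h => h.le),
    hardyCesaro, cesaro]
  rw [hν.integral_mul_integral_comp_smul_mul hpq' hf' hg' hsm hs0 hψm.aestronglyMeasurable hA,
    hν.integral_mul_integral_comp_smul_mul hpq'.symm hg' hf' (c := fun t => (s t)⁻¹) hsm.inv
      (hs0.mono fun _ => inv_ne_zero) (by fun_prop) hA']
  refine integral_congr_ae ?_
  filter_upwards [hs0] with t ht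
  have hscale := hν.integral_comp_smul ht fun y => f y * g ((s t)⁻¹ • y)
  simp only [inv_smul_smul₀ ht, smul_eq_mul] at hscale
  rw [hcesaro t ht, ← mul_assoc, mul_comm _ (|s t| ^ _), ← hscale]
  simp_rw [mul_comm (g _)]

/-- Mutual adjointness of `U_{ψ,s}` and `V_{|s(·)|^{-α}ψ, 1/s}` on weighted spaces:
`∫ g · U_{ψ,s}f · ω = ∫ f · V_{|s(·)|^{-α}ψ,1/s} g · ω`. -/
theorem hardyCesaro_adjoint {n : ℕ} (hn : 1 ≤ n) {α p q β γ : ℝ} (hp : 1 < p)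
    (hpq : 1 / p + 1 / q = 1)
    {ω : EuclideanSpace ℝ (Fin n) → ℝ} (hω : IsWeight n α ω)
    {ψ s : ℝ → ℝ} (hψm : Measurable ψ) (hψ : ∀ t ∈ Icc (0 : ℝ) 1, 0 ≤ ψ t)
    (hsm : Measurable s)
    (hA : IntegrableOn (fun t => |s t| ^ (-((n : ℝ) + α) / p) * ψ t) (Icc (0 : ℝ) 1))
    (hβ : 0 < β) (hγ : 0 < γ)
    (hs : ∀ᵐ t ∂(volume.restrict (Icc (0 : ℝ) 1)), t ^ β ≤ |s t| ∧ |s t| ≤ t ^ (-γ))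
    (f g : EuclideanSpace ℝ (Fin n) → ℝ) (hf : MemWLp ω p f) (hg : MemWLp ω q g) :
    ∫ x, g x * hardyCesaro ψ s f x * ω x =
      ∫ y, f y * cesaro (fun t => |s t| ^ (-α) * ψ t) (fun t => (s t)⁻¹) g y * ω y :=
  hardyCesaro_adjoint_general hp hpq hω hψm hsm hA hs f g hf hg

end
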